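/- Let f ∈ ℤ[x] be a non-constant polynomial with σ := deg(f) + 1, let b_k := (-1)^k·C(σ,k), let θ ∈ (0,1) be irrational with {rθ} < 1/2 and σ·{rθ} < 1 for some positive integer r, and let α ∈ (0,1). If m ∈ ℕ satisfies {mθ + α} + {σrθ} < 1, then Σ_{k=0}^{σ} b_k · f(⌊(m + kr)θ + α⌋) = 0. -/

import Mathlib

/-!
For `k ≤ σ` the hypotheses give `{mθ + α} + k{rθ} ≤ {mθ + α} + σ{rθ} = {mθ + α} + {σrθ} < 1`, so no
carry occurs and `⌊(m + kr)θ + α⌋ = ⌊mθ + α⌋ + k⌊rθ⌋` is an affine function of `k`. The sum is then,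
up to sign, the `σ`-th forward difference of a polynomial of degree `deg f < σ`, hence zero.
-/

open Polynomial Finset

namespace Int

variable {R : Type*} [Ring R] [LinearOrder R] [IsStrictOrderedRing R] [FloorRing R]

theorem floor_add_natCast_mul_of_fract_add_lt {a b : R} {k : ℕ}
    (h : fract a + k * fract b < 1) : ⌊a + k * b⌋ = ⌊a⌋ + k * ⌊b⌋ := by
  have hsplit : a + k * b = ((⌊a⌋ + k * ⌊b⌋ : ℤ) : R) + (fract a + k * fract b) := by
    simp only [fract, mul_sub]; push_cast; abel
  have hcarry : ⌊fract a + k * fract b⌋ = 0 :=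
    floor_eq_zero_iff.mpr ⟨add_nonneg (fract_nonneg a) (by have := fract_nonneg b; positivity), h⟩
  rw [hsplit, floor_intCast_add, hcarry, add_zero]

theorem fract_natCast_mul_of_mul_fract_lt {b : R} {n : ℕ} (h : n * fract b < 1) :
    fract (n * b) = n * fract b := by
  have hfloor : ⌊(n : R) * b⌋ = n * ⌊b⌋ := by
    simpa using floor_add_natCast_mul_of_fract_add_lt (a := (0 : R)) (by simpa using h)
  simp only [fract, hfloor, mul_sub]; push_cast; abel

end Int

theorem Polynomial.sum_range_neg_one_pow_mul_choose_mul_eval_eq_zero {R : Type*} [CommRing R]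
    {P : R[X]} {n : ℕ} (hP : P.natDegree < n) :
    ∑ k ∈ range (n + 1), (-1 : R) ^ k * n.choose k * P.eval (k : R) = 0 := by
  have hΔ : (fwdDiff 1)^[n] P.eval 0 = 0 := by rw [fwdDiff_iter_eq_zero_of_degree_lt hP]; rfl
  rw [fwdDiff_iter_eq_sum_shift] at hΔ
  calc ∑ k ∈ range (n + 1), (-1 : R) ^ k * n.choose k * P.eval (k : R)
      = (-1) ^ n * ∑ k ∈ range (n + 1),
          ((-1 : ℤ) ^ (n - k) * n.choose k) • P.eval (0 + k • (1 : R)) := by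
        rw [mul_sum]
        refine sum_congr rfl fun k hk => ?_
        obtain ⟨j, rfl⟩ := Nat.exists_eq_add_of_le (mem_range_succ_iff.mp hk)
        have hsign : (-1 : R) ^ (k + j) * (-1) ^ j = (-1) ^ k := by
          rw [pow_add, mul_assoc, ← pow_add, Even.neg_one_pow ⟨j, rfl⟩, mul_one]
        simp only [zsmul_eq_mul, nsmul_eq_mul, mul_one, zero_add, Nat.add_sub_cancel_left]
        push_cast
        linear_combination (-((k + j).choose k : R) * P.eval (k : R)) * hsign
    _ = 0 := by rw [hΔ, mul_zero]

theorem stmt6_general (f : Polynomial ℤ) (σ : ℕ) (hσ : σ = f.natDegree + 1) (θ : ℝ) (r : ℕ)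
    (hσr : (σ : ℝ) * Int.fract ((r : ℝ) * θ) < 1) (α : ℝ) (m : ℕ)
    (hm : Int.fract ((m : ℝ) * θ + α) + Int.fract ((σ : ℝ) * r * θ) < 1) :
    ∑ k ∈ Finset.range (σ + 1),
      (-1 : ℤ) ^ k * (σ.choose k : ℤ) * f.eval ⌊((m : ℝ) + k * r) * θ + α⌋ = 0 := by
  set A := ⌊(m : ℝ) * θ + α⌋
  set B := ⌊(r : ℝ) * θ⌋
  rw [mul_assoc, Int.fract_natCast_mul_of_mul_fract_lt hσr] at hm
  have hfloor (k : ℕ) (hk : k ∈ range (σ + 1)) : ⌊((m : ℝ) + k * r) * θ + α⌋ = A + k * B := by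
    have hkσ : (k : ℝ) ≤ σ := by exact_mod_cast mem_range_succ_iff.mp hk
    rw [show ((m : ℝ) + k * r) * θ + α = (m * θ + α) + k * (r * θ) by ring]
    refine Int.floor_add_natCast_mul_of_fract_add_lt ?_
    nlinarith [Int.fract_nonneg ((r : ℝ) * θ)]
  have hdeg : (f.comp (C B * X + C A)).natDegree < σ :=
    calc _ ≤ f.natDegree * (C B * X + C A).natDegree := natDegree_comp_le
      _ ≤ f.natDegree * 1 := Nat.mul_le_mul_left _ natDegree_linear_le
      _ < σ := by omega
  rw [sum_congr rfl fun k hk => by rw [hfloor k hk]]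
  simpa [eval_comp, mul_comm, add_comm] using sum_range_neg_one_pow_mul_choose_mul_eval_eq_zero hdeg

/-- Item 1 of Claim 4.3: if `f ∈ ℤ[x]` is non-constant, `σ = deg f + 1`,
`b_k = (-1)^k C(σ,k)`, `θ ∈ (0,1)` irrational with `{rθ} < 1/2` and `σ{rθ} < 1`,
`α ∈ (0,1)`, and `{mθ+α} + {σrθ} < 1`, then `Σ_{k=0}^{σ} b_k f(⌊(m+kr)θ+α⌋) = 0`. -/
theorem stmt6 (f : Polynomial ℤ) (hf : 1 ≤ f.natDegree) (σ : ℕ)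
    (hσ : σ = f.natDegree + 1)
    (θ : ℝ) (hθ : Irrational θ) (hθ0 : 0 < θ) (hθ1 : θ < 1)
    (r : ℕ) (hr : 0 < r)
    (hhalf : Int.fract ((r : ℝ) * θ) < 1 / 2)
    (hσr : (σ : ℝ) * Int.fract ((r : ℝ) * θ) < 1)
    (α : ℝ) (hα0 : 0 < α) (hα1 : α < 1)
    (m : ℕ)
    (hm : Int.fract ((m : ℝ) * θ + α) + Int.fract ((σ : ℝ) * r * θ) < 1) :
    ∑ k ∈ Finset.range (σ + 1),
      (-1 : ℤ) ^ k * (σ.choose k : ℤ) * f.eval ⌊((m : ℝ) + k * r) * θ + α⌋ = 0 :=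
  stmt6_general f σ hσ θ r hσr α m hm
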